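/- arXiv:1710.02063 — 2 statements merged into one kernel-verified Lean document; each statement's English description precedes it below -/
import Mathlib

section
/- Let A be a generating set of G closed under G-conjugation, let g ∈ G with ℓ_A(g) = n, fix k ≤ n and indices 1 ≤ i₁ < i₂ < ⋯ < i_k ≤ n. For x ∈ G with ℓ_A(x) = k the following are equivalent: (i) x ≤_A g; (ii) there exists a reduced A-factorization (a₁, ..., a_n) of g such that x = a_{i₁} a_{i₂} ⋯ a_{i_k}. -/
variable {G : Type*} [Group G]

/-- `A` generates `G` as a monoid. -/
def GeneratesM (A : Set G) : Prop :=
  ∀ x : G, ∃ l : List G, (∀ a ∈ l, a ∈ A) ∧ l.prod = x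

/-- `A` is closed under `G`-conjugation. -/
def ConjClosed (A : Set G) : Prop :=
  ∀ g a : G, a ∈ A → g * a * g⁻¹ ∈ A

/-- The `A`-length of `x`: minimal number of factors from `A` needed to write `x`. -/
noncomputable def lenA (A : Set G) (x : G) : ℕ :=
  sInf {n : ℕ | ∃ l : List G, (∀ a ∈ l, a ∈ A) ∧ l.prod = x ∧ l.length = n}

/-- The `A`-prefix order. -/
def leA (A : Set G) (x y : G) : Prop :=
  lenA A x + lenA A (x⁻¹ * y) = lenA A y

/-- The set of reduced `A`-factorizations of `x`, as lists. -/
def RedA (A : Set G) (x : G) : Set (List G) :=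
  {l : List G | (∀ a ∈ l, a ∈ A) ∧ l.prod = x ∧ l.length = lenA A x}

/-- `A_c`: the generators occurring below `c`. -/
def Ac (A : Set G) (c : G) : Set G := {a : G | a ∈ A ∧ leA A a c}

/-- A single Hurwitz move on factorizations. -/
def HurwitzMove : List G → List G → Prop := fun l m =>
  ∃ (p s : List G) (a b : G),
    l = p ++ a :: b :: s ∧ m = p ++ b :: (b⁻¹ * a * b) :: s

/-- `r` is a linear order on the set `S`. -/
def IsLinearOrderOn (S : Set G) (r : G → G → Prop) : Prop :=
  (∀ a ∈ S, r a a) ∧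
  (∀ a ∈ S, ∀ b ∈ S, r a b → r b a → a = b) ∧
  (∀ a ∈ S, ∀ b ∈ S, ∀ c ∈ S, r a b → r b c → r a c) ∧
  (∀ a ∈ S, ∀ b ∈ S, r a b ∨ r b a)

/-- `r` is a `c`-compatible order: every length-2 element below `c` has a unique
rising reduced factorization. -/
def CompatibleOrder (A : Set G) (c : G) (r : G → G → Prop) : Prop :=
  ∀ g : G, leA A g c → lenA A g = 2 →
    ∃! l : List G, l ∈ RedA A g ∧ l.Chain' r

/-- Two factorizations correspond to maximal chains differing in exactly one element. -/
def ChainAdj (l m : List G) : Prop :=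
  l ≠ m ∧ ∃ (p s : List G) (a b a' b' : G),
    l = p ++ a :: b :: s ∧ m = p ++ a' :: b' :: s ∧ a * b = a' * b'

/-- Covering relation in the graded factorization poset. -/
def CoversA (A : Set G) (x y : G) : Prop := leA A x y ∧ lenA A y = lenA A x + 1

/-- `F_≺(a; g)`: upper covers of the atom `a` in `P_g` that also cover a strictly
smaller atom. -/
def Fset (A : Set G) (r : G → G → Prop) (a g : G) : Set G :=
  {h : G | CoversA A a h ∧ leA A h g ∧
    ∃ a' ∈ A, a' ≠ a ∧ r a' a ∧ CoversA A a' h}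

/-- `P_c` is well-covered with respect to `r`. -/
def WellCovered (A : Set G) (c : G) (r : G → G → Prop) : Prop :=
  ∀ a ∈ A, leA A a c →
    (Fset A r a c = ∅ ↔ ∀ b ∈ A, leA A b c → r a b)

/-- `P_c` is totally well-covered with respect to `r`. -/
def TotallyWellCovered (A : Set G) (c : G) (r : G → G → Prop) : Prop :=
  ∀ g : G, leA A g c → WellCovered A g r

section

variable {A : Set G}

/-!
A conjugation-closed generating set lets a letter move past a word `w` at the price of being
conjugated by `w`. Hence the letters of reduced factorizations of `x` and of `x⁻¹ g` can be
interleaved so that those of `x` land at the positions `i₁ < ⋯ < i_k`; conversely, pulling the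
subword at these positions to the front of a reduced factorization of `g` leaves `n - k` letters
with product `x⁻¹ g`, which forces `ℓ(x) + ℓ(x⁻¹ g) = n`.
-/

theorem lenA_le_length {l : List G} (hl : ∀ a ∈ l, a ∈ A) : lenA A l.prod ≤ l.length :=
  Nat.sInf_le ⟨l, hl, rfl, rfl⟩

theorem GeneratesM.exists_mem_redA (hgen : GeneratesM A) (x : G) : ∃ l, l ∈ RedA A x := by
  obtain ⟨l, hl, hx⟩ := hgen x
  exact Nat.sInf_mem
    (s := {n | ∃ l : List G, (∀ a ∈ l, a ∈ A) ∧ l.prod = x ∧ l.length = n})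
    ⟨l.length, l, hl, hx, rfl⟩

theorem GeneratesM.lenA_mul_le (hgen : GeneratesM A) (x y : G) :
    lenA A (x * y) ≤ lenA A x + lenA A y := by
  obtain ⟨l₁, hl₁, rfl, hn₁⟩ := hgen.exists_mem_redA x
  obtain ⟨l₂, hl₂, rfl, hn₂⟩ := hgen.exists_mem_redA y
  rw [← hn₁, ← hn₂, ← List.length_append, ← List.prod_append]
  exact lenA_le_length fun a ha => (List.mem_append.1 ha).elim (hl₁ a) (hl₂ a)

theorem GeneratesM.leA_of_lenA_add_le (hgen : GeneratesM A) {x g : G}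
    (h : lenA A x + lenA A (x⁻¹ * g) ≤ lenA A g) : leA A x g :=
  h.antisymm (by simpa using hgen.lenA_mul_le x (x⁻¹ * g))

namespace ConjClosed

theorem exists_prod_mul_eq_prod_of_sublist (hconj : ConjClosed A) {s l : List G}
    (h : s.Sublist l) (hl : ∀ a ∈ l, a ∈ A) :
    ∃ t : List G, (∀ a ∈ t, a ∈ A) ∧ s.length + t.length = l.length ∧
      s.prod * t.prod = l.prod := by
  induction h with
  | slnil => exact ⟨[], by simp, rfl, by simp⟩
  | @cons s l a _ ih =>
    obtain ⟨t, ht, hlen, hprod⟩ := ih fun b hb => hl b (List.mem_cons_of_mem _ hb)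
    refine ⟨(s.prod⁻¹ * a * s.prod) :: t, ?_, by simp only [List.length_cons]; omega, ?_⟩
    · simp only [List.mem_cons, forall_eq_or_imp]
      exact ⟨by simpa using hconj s.prod⁻¹ a (hl a List.mem_cons_self), ht⟩
    · rw [List.prod_cons, List.prod_cons, ← hprod]
      group
  | @cons_cons s l a _ ih =>
    obtain ⟨t, ht, hlen, hprod⟩ := ih fun b hb => hl b (List.mem_cons_of_mem _ hb)
    refine ⟨t, ht, by simp only [List.length_cons]; omega, ?_⟩
    rw [List.prod_cons, List.prod_cons, mul_assoc, hprod]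

/-- `(s.zip u).Sublist (l.zip m)` says that `u` occurs in `m` at the positions that `s` occupies
in `l`. -/
theorem exists_interleave {α : Type*} (hconj : ConjClosed A) {s l : List α} (h : s.Sublist l)
    {u v : List G} (hu : u.length = s.length) (hv : v.length + s.length = l.length)
    (huA : ∀ a ∈ u, a ∈ A) (hvA : ∀ a ∈ v, a ∈ A) :
    ∃ m : List G, m.length = l.length ∧ (∀ a ∈ m, a ∈ A) ∧ m.prod = u.prod * v.prod ∧
      (s.zip u).Sublist (l.zip m) := by
  induction h generalizing u v with
  | slnil =>
    obtain rfl := List.length_eq_zero_iff.1 hu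
    obtain rfl := List.length_eq_zero_iff.1 (by simpa using hv)
    exact ⟨[], rfl, by simp, by simp, by simp⟩
  | @cons s l a hsl ih =>
    obtain _ | ⟨c, v⟩ := v
    · have := hsl.length_le; simp only [List.length_nil, List.length_cons] at hv; omega
    simp only [List.mem_cons, forall_eq_or_imp] at hvA
    obtain ⟨m, hlen, hmA, hprod, hzip⟩ :=
      ih hu (by simp only [List.length_cons] at hv; omega) huA hvA.2
    refine ⟨(u.prod * c * u.prod⁻¹) :: m, by simp [hlen], ?_, ?_, hzip.cons _⟩
    · simp only [List.mem_cons, forall_eq_or_imp]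
      exact ⟨hconj u.prod c hvA.1, hmA⟩
    · rw [List.prod_cons, hprod, List.prod_cons]
      group
  | @cons_cons s l a _ ih =>
    obtain _ | ⟨b, u⟩ := u
    · simp at hu
    simp only [List.mem_cons, forall_eq_or_imp] at huA
    obtain ⟨m, hlen, hmA, hprod, hzip⟩ :=
      ih (by simpa using hu) (by simp only [List.length_cons] at hv; omega) huA.2 hvA
    refine ⟨b :: m, by simp [hlen], ?_, ?_, hzip.cons_cons _⟩
    · simp only [List.mem_cons, forall_eq_or_imp]
      exact ⟨huA.1, hmA⟩
    · rw [List.prod_cons, List.prod_cons, hprod, mul_assoc]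

end ConjClosed

end

theorem List.ofFn_sublist_finRange {k n : ℕ} {i : Fin k → Fin n} (hi : StrictMono i) :
    (List.ofFn i).Sublist (List.finRange n) :=
  List.sublist_of_subperm_of_sortedLE
    (hi.sortedLT_ofFn.nodup.subperm fun p _ => List.mem_finRange p)
    hi.sortedLT_ofFn.sortedLE (List.sortedLT_finRange n).sortedLE

theorem List.ofFn_comp_sublist {α : Type*} {k n : ℕ} (a : Fin n → α) {i : Fin k → Fin n}
    (hi : StrictMono i) : (List.ofFn fun j => a (i j)).Sublist (List.ofFn a) := by
  have h := (List.ofFn_sublist_finRange hi).map a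
  rwa [List.map_ofFn, ← List.ofFn_eq_map] at h

theorem List.ofFn_comp_eq_of_zip_sublist {α : Type*} {k n : ℕ} {i : Fin k → Fin n}
    {a : Fin n → α} {u : List α} (hu : u.length = k)
    (h : ((List.ofFn i).zip u).Sublist ((List.finRange n).zip (List.ofFn a))) :
    List.ofFn (fun j => a (i j)) = u := by
  subst hu
  refine List.ext_getElem (by simp) fun j hj _ => ?_
  have hmem : (i ⟨j, by simpa using hj⟩, u[j]) ∈ (List.finRange n).zip (List.ofFn a) :=
    h.subset (List.mem_iff_getElem.2 ⟨j, by simpa using hj, by simp⟩)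
  have hgraph : (List.finRange n).zip (List.ofFn a) = List.ofFn fun p => (p, a p) :=
    List.ext_getElem (by simp) fun q _ _ => by simp
  obtain ⟨p, hp⟩ := List.mem_ofFn.1 (hgraph ▸ hmem)
  simp only [Prod.mk.injEq] at hp
  simp [← hp.2, hp.1]

theorem subword_order_general (A : Set G) (hgen : GeneratesM A) (hconj : ConjClosed A)
    (g : G) (n k : ℕ) (hn : lenA A g = n)
    (i : Fin k → Fin n) (hi : StrictMono i)
    (x : G) (hx : lenA A x = k) :
    leA A x g ↔
      ∃ a : Fin n → G, List.ofFn a ∈ RedA A g ∧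
        x = (List.ofFn fun j : Fin k => a (i j)).prod := by
  constructor
  · intro hle
    obtain ⟨u, huA, rfl, hu⟩ := hgen.exists_mem_redA x
    obtain ⟨v, hvA, hv, hvlen⟩ := hgen.exists_mem_redA (u.prod⁻¹ * g)
    have hle' : lenA A u.prod + lenA A (u.prod⁻¹ * g) = lenA A g := hle
    obtain ⟨m, hm, hmA, hprod, hzip⟩ :=
      hconj.exists_interleave (List.ofFn_sublist_finRange hi) (by simp [hu, hx])
        (by simp only [List.length_ofFn, List.length_finRange]; omega) huA hvA
    obtain ⟨a, rfl⟩ : ∃ a : Fin n → G, List.ofFn a = m :=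
      ⟨fun p => m[p.val]'(by simp [hm]), List.ext_getElem (by simp [hm]) fun _ _ _ => by simp⟩
    refine ⟨a, ⟨hmA, by rw [hprod, hv]; group, by simp [hn]⟩, ?_⟩
    rw [List.ofFn_comp_eq_of_zip_sublist (by rw [hu, hx]) hzip]
  · rintro ⟨a, ⟨haA, rfl, hlen⟩, rfl⟩
    obtain ⟨t, htA, htlen, hprod⟩ :=
      hconj.exists_prod_mul_eq_prod_of_sublist (List.ofFn_comp_sublist a hi) haA
    apply hgen.leA_of_lenA_add_le
    have hrest : (List.ofFn fun j => a (i j)).prod⁻¹ * (List.ofFn a).prod = t.prod := by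
      rw [← hprod]; group
    have hrest_le := lenA_le_length htA
    simp only [List.length_ofFn] at htlen hlen
    rw [hrest]
    omega

theorem subword_order (A : Set G) (hgen : GeneratesM A) (hconj : ConjClosed A)
    (g : G) (n k : ℕ) (hn : lenA A g = n) (hk : k ≤ n)
    (i : Fin k → Fin n) (hi : StrictMono i)
    (x : G) (hx : lenA A x = k) :
    leA A x g ↔
      ∃ a : Fin n → G, List.ofFn a ∈ RedA A g ∧
        x = (List.ofFn fun j : Fin k => a (i j)).prod :=
  subword_order_general A hgen hconj g n k hn i hi x hx
end

section
/- Let c ∈ G with ℓ_A(c) = 2 and Red_A(c) finite. Then the number of Hurwitz orbits of Red_A(c) equals the minimum, over all linear orders ≺ on A_c = {a ∈ A : a ≤_A c}, of the number of ≺-rising reduced A-factorizations of c. In particular, for any linear order ≺, the number of Hurwitz orbits is at most the number of ≺-rising factorizations, and there exists an order achieving equality. -/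
variable {G : Type*} [Group G]

/-!
Since `ℓ_A(c) = 2`, a reduced factorization of `c` is `[x, x⁻¹ c]` with `x` and `x⁻¹ c` in `A`, so
it is determined by its first letter, and the Hurwitz move acts on first letters as the
permutation `σ : x ↦ x⁻¹ c`. Hurwitz orbits are therefore the cycles of `σ` on the (finite,
`σ`-invariant) set of first letters, and rising factorizations are the ascents `x ≼ σ x`. Every
cycle contains an ascent, namely its `≼`-least element, which bounds the number of orbits by the
number of rising factorizations. Conversely, ordering the first letters by the number of steps `σ`
needs to carry them to a chosen representative of their cycle makes the representatives the only
ascents.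
-/

open Equiv Equiv.Perm Function Set

section LinearOrderOn

variable {α : Type*}

theorem IsLinearOrderOn.mono {S T : Set α} {r : α → α → Prop} (h : IsLinearOrderOn T r)
    (hST : S ⊆ T) : IsLinearOrderOn S r :=
  ⟨fun a ha => h.1 a (hST ha), fun a ha b hb => h.2.1 a (hST ha) b (hST hb),
    fun a ha b hb c hc => h.2.2.1 a (hST ha) b (hST hb) c (hST hc),
    fun a ha b hb => h.2.2.2 a (hST ha) b (hST hb)⟩

theorem isLinearOrderOn_of_injective {β : Type*} [LinearOrder β] {f : α → β}
    (hf : Injective f) (S : Set α) : IsLinearOrderOn S (fun a b => f a ≤ f b) :=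
  ⟨fun _ _ => le_rfl, fun _ _ _ _ hab hba => hf (le_antisymm hab hba),
    fun _ _ _ _ _ _ => le_trans, fun _ _ _ _ => le_total _ _⟩

theorem IsLinearOrderOn.exists_least {S : Set α} {r : α → α → Prop} (h : IsLinearOrderOn S r)
    {Y : Set α} (hY : Y.Finite) (hYS : Y ⊆ S) (hne : Y.Nonempty) :
    ∃ m ∈ Y, ∀ y ∈ Y, r m y := by
  let : LinearOrder S :=
    { le a b := r a b
      le_refl a := h.1 a a.2
      le_trans a b c := h.2.2.1 a a.2 b b.2 c c.2
      le_antisymm a b hab hba := Subtype.ext (h.2.1 a a.2 b b.2 hab hba)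
      le_total a b := h.2.2.2 a a.2 b b.2
      toDecidableLE := Classical.decRel _ }
  obtain ⟨y, hy⟩ := hne
  obtain ⟨m, hm, hmin⟩ := exists_min_image {s : S | s.1 ∈ Y} id
    (hY.preimage Subtype.val_injective.injOn) ⟨⟨y, hYS hy⟩, hy⟩
  exact ⟨m, hm, fun z hz => hmin ⟨z, hYS hz⟩ hz⟩

end LinearOrderOn

section Cycles

variable {α : Type*} {σ : Perm α} {X : Set α}

theorem mem_and_exists_nat_pow_eq_of_sameCycle (hX : X.Finite) (hσX : ∀ x, σ x ∈ X ↔ x ∈ X)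
    {x y : α} (hx : x ∈ X) (h : σ.SameCycle x y) : y ∈ X ∧ ∃ n : ℕ, (σ ^ n) x = y := by
  have := hX.to_subtype
  obtain ⟨i, rfl⟩ := h
  have hmem : (σ ^ i) x ∈ X := by
    simpa [subtypePerm_zpow] using ((σ.subtypePerm hσX ^ i) ⟨x, hx⟩).2
  have hsub : (σ.subtypePerm hσX).SameCycle ⟨x, hx⟩ ⟨_, hmem⟩ :=
    sameCycle_subtypePerm.2 ⟨i, rfl⟩
  obtain ⟨n, hn⟩ := hsub.exists_nat_pow_eq
  exact ⟨hmem, n, by simpa [subtypePerm_pow] using congrArg Subtype.val hn⟩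

variable (σ) in
noncomputable def cycleRep (x : α) : α := (Quotient.mk (SameCycle.setoid σ) x).out

theorem sameCycle_cycleRep (x : α) : σ.SameCycle x (cycleRep σ x) :=
  SameCycle.symm (Quotient.mk_out (s := SameCycle.setoid σ) x)

theorem cycleRep_eq_cycleRep_iff {x y : α} : cycleRep σ x = cycleRep σ y ↔ σ.SameCycle x y :=
  Quotient.out_inj.trans (Quotient.eq (r := SameCycle.setoid σ))

theorem cycleRep_apply (x : α) : cycleRep σ (σ x) = cycleRep σ x :=
  cycleRep_eq_cycleRep_iff.2 (sameCycle_apply_left.2 (SameCycle.refl σ x))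

variable (σ) in
noncomputable def cycleDist (x : α) : ℕ := sInf {n | (σ ^ n) x = cycleRep σ x}

theorem pow_cycleDist (hX : X.Finite) (hσX : ∀ x, σ x ∈ X ↔ x ∈ X) {x : α} (hx : x ∈ X) :
    (σ ^ cycleDist σ x) x = cycleRep σ x :=
  Nat.sInf_mem (mem_and_exists_nat_pow_eq_of_sameCycle hX hσX hx (sameCycle_cycleRep x)).2

theorem cycleDist_eq_zero_iff (hX : X.Finite) (hσX : ∀ x, σ x ∈ X ↔ x ∈ X) {x : α}
    (hx : x ∈ X) : cycleDist σ x = 0 ↔ cycleRep σ x = x := by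
  refine ⟨fun h => ?_, fun h => Nat.sInf_eq_zero.2 (Or.inl (by simp [h]))⟩
  simpa [h] using (pow_cycleDist hX hσX hx).symm

theorem cycleDist_apply_lt (hX : X.Finite) (hσX : ∀ x, σ x ∈ X ↔ x ∈ X) {x : α} (hx : x ∈ X)
    (h : cycleDist σ x ≠ 0) : cycleDist σ (σ x) < cycleDist σ x := by
  obtain ⟨k, hk⟩ := Nat.exists_eq_succ_of_ne_zero h
  have hpow : (σ ^ k) (σ x) = cycleRep σ (σ x) := by
    rw [cycleRep_apply, ← pow_cycleDist hX hσX hx, hk, pow_succ, Perm.mul_apply]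
  exact hk ▸ Nat.lt_succ_of_le (Nat.sInf_le hpow)

end Cycles

section Ascents

variable {α : Type*} {σ : Perm α} {X : Set α}

theorem ncard_image_sameCycle_le_ncard_ascents (hX : X.Finite) (hσX : MapsTo σ X X)
    {r : α → α → Prop} (hr : IsLinearOrderOn X r) :
    (Quotient.mk (SameCycle.setoid σ) '' X).ncard ≤ {x ∈ X | r x (σ x)}.ncard := by
  have hcover : Quotient.mk (SameCycle.setoid σ) '' X ⊆
      Quotient.mk (SameCycle.setoid σ) '' {x ∈ X | r x (σ x)} := by
    rintro _ ⟨x, hx, rfl⟩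
    obtain ⟨m, ⟨hmX, hxm⟩, hmin⟩ := hr.exists_least (Y := {y ∈ X | σ.SameCycle x y})
      (hX.subset (sep_subset _ _)) (sep_subset _ _) ⟨x, hx, SameCycle.refl σ x⟩
    exact ⟨m, ⟨hmX, hmin _ ⟨hσX hmX, sameCycle_apply_right.2 hxm⟩⟩, Quotient.sound hxm.symm⟩
  calc _ ≤ _ := ncard_le_ncard hcover ((hX.subset (sep_subset _ _)).image _)
    _ ≤ _ := ncard_image_le (hX.subset (sep_subset _ _))

-- The second coordinate only separates elements of different cycles at the same distance.
noncomputable def cycleDistOrder (σ : Perm α) (a b : α) : Prop :=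
  let : LinearOrder α := WellOrderingRel.isWellOrder.linearOrder
  toLex (cycleDist σ a, a) ≤ toLex (cycleDist σ b, b)

theorem cycleDistOrder_apply_iff (hX : X.Finite) (hσX : ∀ x, σ x ∈ X ↔ x ∈ X) {x : α}
    (hx : x ∈ X) : cycleDistOrder σ x (σ x) ↔ cycleRep σ x = x := by
  let : LinearOrder α := WellOrderingRel.isWellOrder.linearOrder
  have hσx : σ x ∈ X := (hσX x).2 hx
  show toLex (cycleDist σ x, x) ≤ toLex (cycleDist σ (σ x), σ x) ↔ _
  rw [Prod.Lex.toLex_le_toLex]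
  constructor
  · intro h
    by_contra hrep
    have hlt := cycleDist_apply_lt hX hσX hx ((cycleDist_eq_zero_iff hX hσX hx).not.2 hrep)
    rcases h with h | ⟨h, -⟩ <;> omega
  · intro hrep
    have hzero : cycleDist σ x = 0 := (cycleDist_eq_zero_iff hX hσX hx).2 hrep
    rcases Nat.eq_zero_or_pos (cycleDist σ (σ x)) with h | h
    · have hfix : σ x = x := by
        rw [← (cycleDist_eq_zero_iff hX hσX hσx).1 h, cycleRep_apply, hrep]
      exact Or.inr ⟨by rw [h, hzero], hfix.ge⟩
    · exact Or.inl (hzero ▸ h)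

theorem exists_isLinearOrderOn_ncard_ascents_eq (hX : X.Finite) (hσX : ∀ x, σ x ∈ X ↔ x ∈ X) :
    ∃ r : α → α → Prop, IsLinearOrderOn univ r ∧
      {x ∈ X | r x (σ x)}.ncard = (Quotient.mk (SameCycle.setoid σ) '' X).ncard := by
  refine ⟨cycleDistOrder σ, ?_, ?_⟩
  · let : LinearOrder α := WellOrderingRel.isWellOrder.linearOrder
    exact isLinearOrderOn_of_injective (f := fun a => toLex (cycleDist σ a, a))
      (fun a b h => congrArg Prod.snd (toLex.injective h)) univ
  have hreps : {x ∈ X | cycleDistOrder σ x (σ x)} = {x ∈ X | cycleRep σ x = x} :=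
    sep_ext_iff.2 fun x hx => cycleDistOrder_apply_iff hX hσX hx
  have hinj : InjOn (Quotient.mk (SameCycle.setoid σ)) {x ∈ X | cycleRep σ x = x} :=
    fun x hx y hy h => by
      rw [← hx.2, ← hy.2, cycleRep_eq_cycleRep_iff]
      exact Quotient.exact h
  have himage : Quotient.mk (SameCycle.setoid σ) '' {x ∈ X | cycleRep σ x = x} =
      Quotient.mk (SameCycle.setoid σ) '' X := by
    refine (image_mono (sep_subset _ _)).antisymm ?_
    rintro _ ⟨x, hx, rfl⟩
    have hxr := sameCycle_cycleRep (σ := σ) x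
    refine ⟨cycleRep σ x, ⟨(mem_and_exists_nat_pow_eq_of_sameCycle hX hσX hx hxr).1, ?_⟩,
      Quotient.sound hxr.symm⟩
    exact cycleRep_eq_cycleRep_iff.2 hxr.symm
  rw [hreps, ← himage, hinj.ncard_image]

end Ascents

theorem Set.ncard_setOf_inter_eq_ncard_image {α β : Type*} {s : Set α} {R : α → α → Prop}
    (f : α → β) (hR : ∀ a ∈ s, ∀ b ∈ s, R a b ↔ f a = f b) :
    {O | ∃ a ∈ s, O = s ∩ {b | R a b}}.ncard = (f '' s).ncard := by
  have hclasses :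
      {O | ∃ a ∈ s, O = s ∩ {b | R a b}} = (fun y => {b ∈ s | f b = y}) '' (f '' s) := by
    ext O
    simp only [mem_ofPred_eq, mem_image, exists_exists_and_eq_and]
    refine exists_congr fun a => and_congr_right fun ha => ?_
    have hclass : s ∩ {b | R a b} = {b ∈ s | f b = f a} :=
      ext fun b => and_congr_right fun hb => (hR a ha b hb).trans eq_comm
    rw [hclass, eq_comm]
  rw [hclasses]
  refine InjOn.ncard_image ?_
  rintro _ ⟨a, ha, rfl⟩ y - h
  have ha' : a ∈ {b ∈ s | f b = y} := by
    simp only at h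
    rw [← h]
    exact ⟨ha, rfl⟩
  exact ha'.2

section Hurwitz

def hurwitzPerm (c : G) : Perm G := (Equiv.inv G).trans (Equiv.mulRight c)

@[simp]
theorem hurwitzPerm_apply (c x : G) : hurwitzPerm c x = x⁻¹ * c := rfl

def factorPair (c x : G) : List G := [x, x⁻¹ * c]

theorem factorPair_injective (c : G) : Injective (factorPair c) :=
  fun _ _ h => (List.cons.inj h).1

theorem hurwitzMove_factorPair (c x : G) :
    HurwitzMove (factorPair c x) (factorPair c (hurwitzPerm c x)) :=
  ⟨[], [], x, x⁻¹ * c, rfl, by simp [factorPair, mul_assoc]⟩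

theorem HurwitzMove.length_eq {l m : List G} (h : HurwitzMove l m) : m.length = l.length := by
  obtain ⟨p, s, a, b, rfl, rfl⟩ := h
  simp

theorem HurwitzMove.prod_eq {l m : List G} (h : HurwitzMove l m) : m.prod = l.prod := by
  obtain ⟨p, s, a, b, rfl, rfl⟩ := h
  simp [mul_assoc]

theorem HurwitzMove.eq_of_length_eq_two {l m : List G} (h : HurwitzMove l m)
    (hl : l.length = 2) : ∃ a b, l = [a, b] ∧ m = [b, b⁻¹ * a * b] := by
  obtain ⟨p, s, a, b, rfl, rfl⟩ := h
  obtain ⟨rfl, rfl⟩ : p = [] ∧ s = [] := by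
    simp only [List.length_append, List.length_cons] at hl
    exact ⟨List.eq_nil_of_length_eq_zero (by omega), List.eq_nil_of_length_eq_zero (by omega)⟩
  exact ⟨a, b, rfl, rfl⟩

open Classical in
noncomputable def factorPairKey (c : G) (l : List G) :
    Option (Quotient (SameCycle.setoid (hurwitzPerm c))) :=
  if l.length = 2 ∧ l.prod = c then some (Quotient.mk _ (l.headD 1)) else none

theorem HurwitzMove.factorPairKey_eq {c : G} {l m : List G} (h : HurwitzMove l m) :
    factorPairKey c m = factorPairKey c l := by
  by_cases hl : l.length = 2 ∧ l.prod = c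
  · obtain ⟨a, b, rfl, rfl⟩ := h.eq_of_length_eq_two hl.1
    have hb : b = hurwitzPerm c a := by simp [← hl.2]
    have hl' : [b, b⁻¹ * a * b].length = 2 ∧ [b, b⁻¹ * a * b].prod = c := by
      simp [← hl.2, mul_assoc]
    rw [factorPairKey, factorPairKey, if_pos hl, if_pos hl', List.headD_cons, List.headD_cons, hb]
    exact congrArg some (Quotient.sound (sameCycle_apply_left.2 (SameCycle.refl _ a)))
  · rw [factorPairKey, factorPairKey, h.length_eq, h.prod_eq, if_neg hl, if_neg hl]

theorem factorPairKey_factorPair (c x : G) :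
    factorPairKey c (factorPair c x) = some (Quotient.mk _ x) :=
  if_pos (by simp [factorPair])

theorem eqvGen_hurwitzMove_factorPair_iff {c x y : G} :
    Relation.EqvGen HurwitzMove (factorPair c x) (factorPair c y) ↔
      (hurwitzPerm c).SameCycle x y := by
  constructor
  · intro h
    have hkey : factorPairKey c (factorPair c x) = factorPairKey c (factorPair c y) :=
      Setoid.eqvGen_le (s := Setoid.ker (factorPairKey c))
        (fun _ _ hlm => hlm.factorPairKey_eq.symm) h
    rw [factorPairKey_factorPair, factorPairKey_factorPair] at hkey
    exact Quotient.exact (Option.some.inj hkey)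
  · rintro ⟨i, rfl⟩
    induction i using Int.induction_on with
    | zero => exact Relation.EqvGen.refl _
    | succ n ih =>
      rw [add_comm, zpow_add, zpow_one, Perm.mul_apply]
      exact ih.trans _ _ _ (.rel _ _ (hurwitzMove_factorPair c _))
    | pred n ih =>
      have hmove := hurwitzMove_factorPair c ((hurwitzPerm c ^ (-(n : ℤ) - 1)) x)
      rw [← Perm.mul_apply, ← zpow_one_add, add_sub_cancel] at hmove
      exact ih.trans _ _ _ (.symm _ _ (.rel _ _ hmove))

end Hurwitz

section Factorizations

variable {A : Set G} {c : G}

theorem lenA_le_one_of_mem {a : G} (ha : a ∈ A) : lenA A a ≤ 1 :=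
  Nat.sInf_le ⟨[a], by simp [ha]⟩

theorem eq_one_of_lenA_eq_zero {a : G} (ha : a ∈ A) (h : lenA A a = 0) : a = 1 := by
  rcases Nat.sInf_eq_zero.1 h with ⟨l, -, hl, hlen⟩ | hempty
  · rw [← hl, List.eq_nil_of_length_eq_zero hlen, List.prod_nil]
  · exact (eq_empty_iff_forall_notMem.1 hempty 1 ⟨[a], by simp [ha]⟩).elim

def leftFactors (A : Set G) (c : G) : Set G := {x | x ∈ A ∧ x⁻¹ * c ∈ A}

theorem leftFactors_subset_Ac (h2 : lenA A c = 2) : leftFactors A c ⊆ Ac A c := by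
  rintro x ⟨hx, hxc⟩
  have hx1 : lenA A x ≠ 0 := fun h => by
    have hcA : c ∈ A := by simpa [eq_one_of_lenA_eq_zero hx h] using hxc
    have := lenA_le_one_of_mem hcA
    omega
  have hxc1 : lenA A (x⁻¹ * c) ≠ 0 := fun h => by
    have hcA : c ∈ A := by simpa [inv_mul_eq_one.1 (eq_one_of_lenA_eq_zero hxc h)] using hx
    have := lenA_le_one_of_mem hcA
    omega
  have := lenA_le_one_of_mem hx
  have := lenA_le_one_of_mem hxc
  exact ⟨hx, by unfold leA; omega⟩

theorem hurwitzPerm_mem_leftFactors_iff (hconj : ConjClosed A) {x : G} :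
    hurwitzPerm c x ∈ leftFactors A c ↔ x ∈ leftFactors A c := by
  simp only [leftFactors, hurwitzPerm_apply, mem_ofPred_eq, mul_inv_rev, inv_inv]
  refine ⟨fun ⟨h1, h2⟩ => ⟨?_, h1⟩, fun ⟨h1, h2⟩ => ⟨h2, ?_⟩⟩
  · simpa [mul_assoc] using hconj c _ h2
  · simpa [mul_assoc] using hconj c⁻¹ _ h1

theorem RedA_eq_image_factorPair (h2 : lenA A c = 2) :
    RedA A c = factorPair c '' leftFactors A c := by
  ext l
  constructor
  · rintro ⟨hA, hprod, hlen⟩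
    obtain ⟨a, b, rfl⟩ : ∃ a b, l = [a, b] := List.length_eq_two.1 (hlen.trans h2)
    have hb : b = a⁻¹ * c := by simp [← hprod]
    subst hb
    exact ⟨a, ⟨hA a (by simp), hA _ (by simp)⟩, rfl⟩
  · rintro ⟨x, ⟨hx, hxc⟩, rfl⟩
    refine ⟨?_, by simp [factorPair], by simp [factorPair, h2]⟩
    simp [factorPair, hx, hxc]

end Factorizations

section Counting

variable {A : Set G} {c : G}

theorem ncard_hurwitzOrbits_eq (h2 : lenA A c = 2) :
    {O : Set (List G) | ∃ l ∈ RedA A c,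
        O = RedA A c ∩ {m | Relation.EqvGen HurwitzMove l m}}.ncard =
      (Quotient.mk (SameCycle.setoid (hurwitzPerm c)) '' leftFactors A c).ncard := by
  rw [RedA_eq_image_factorPair h2,
    Set.ncard_setOf_inter_eq_ncard_image (fun l => Quotient.mk _ (l.headD 1)), image_image]
  · rfl
  · rintro _ ⟨x, -, rfl⟩ _ ⟨y, -, rfl⟩
    exact eqvGen_hurwitzMove_factorPair_iff.trans (Quotient.eq (r := SameCycle.setoid _)).symm

theorem ncard_rising_eq (h2 : lenA A c = 2) (r : G → G → Prop) :
    {l ∈ RedA A c | l.Chain' r}.ncard =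
      {x ∈ leftFactors A c | r x (hurwitzPerm c x)}.ncard := by
  rw [RedA_eq_image_factorPair h2, ← (factorPair_injective c).injOn.ncard_image]
  congr 1
  ext l
  constructor
  · rintro ⟨⟨x, hx, rfl⟩, hr⟩
    exact ⟨x, ⟨hx, List.isChain_pair.1 hr⟩, rfl⟩
  · rintro ⟨x, ⟨hx, hr⟩, rfl⟩
    exact ⟨⟨x, hx, rfl⟩, List.isChain_pair.2 hr⟩

end Counting

theorem orbits_eq_min_rising_general (A : Set G)
    (hconj : ConjClosed A) (c : G) (h2 : lenA A c = 2)
    (hfin : (RedA A c).Finite) :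
    IsLeast
      {n : ℕ | ∃ r : G → G → Prop, IsLinearOrderOn (Ac A c) r ∧
        n = {l ∈ RedA A c | l.Chain' r}.ncard}
      ({O : Set (List G) | ∃ l ∈ RedA A c,
        O = RedA A c ∩ {m : List G | Relation.EqvGen HurwitzMove l m}}.ncard) := by
  have hX : (leftFactors A c).Finite :=
    .of_finite_image (RedA_eq_image_factorPair h2 ▸ hfin) (factorPair_injective c).injOn
  have hσX : ∀ x, hurwitzPerm c x ∈ leftFactors A c ↔ x ∈ leftFactors A c :=
    fun _ => hurwitzPerm_mem_leftFactors_iff hconj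
  rw [ncard_hurwitzOrbits_eq h2]
  constructor
  · obtain ⟨r, hr, hcount⟩ := exists_isLinearOrderOn_ncard_ascents_eq hX hσX
    exact ⟨r, hr.mono (subset_univ _), by rw [ncard_rising_eq h2, hcount]⟩
  · rintro n ⟨r, hr, rfl⟩
    rw [ncard_rising_eq h2]
    exact ncard_image_sameCycle_le_ncard_ascents hX (fun x => (hσX x).2)
      (hr.mono (leftFactors_subset_Ac h2))

theorem orbits_eq_min_rising (A : Set G) (hgen : GeneratesM A)
    (hconj : ConjClosed A) (c : G) (h2 : lenA A c = 2)
    (hfin : (RedA A c).Finite) :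
    IsLeast
      {n : ℕ | ∃ r : G → G → Prop, IsLinearOrderOn (Ac A c) r ∧
        n = {l ∈ RedA A c | l.Chain' r}.ncard}
      ({O : Set (List G) | ∃ l ∈ RedA A c,
        O = RedA A c ∩ {m : List G | Relation.EqvGen HurwitzMove l m}}.ncard) :=
  orbits_eq_min_rising_general A hconj c h2 hfin
end
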